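/- If a Banach space X has the Daugavet property, then X has the strong diameter 2 property: for every finite convex combination Σ λ_j S_j of slices of B_X and every ε > 0, there exist points u, v ∈ Σ λ_j S_j with ‖u − v‖ > 2 − ε. -/

import Mathlib

open Metric Set
open scoped ENNReal

/-- A subset of a normed space is *weakly open* if it is open in the weak topology. -/
def IsWeaklyOpen {X : Type*} [NormedAddCommGroup X] [NormedSpace ℝ X] (W : Set X) : Prop :=
  IsOpen ((toWeakSpace ℝ X).symm ⁻¹' W)

/-- The slice of the closed unit ball determined by a functional `f` and `ε > 0`. -/
def Slice {X : Type*} [NormedAddCommGroup X] [NormedSpace ℝ X]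
    (f : X →L[ℝ] ℝ) (ε : ℝ) : Set X :=
  {x | ‖x‖ ≤ 1 ∧ 1 - ε < f x}

/-- A finite convex combination of slices of the unit ball. -/
def CombSlices {X : Type*} [NormedAddCommGroup X] [NormedSpace ℝ X] {n : ℕ}
    (lam : Fin n → ℝ) (f : Fin n → X →L[ℝ] ℝ) (ε : Fin n → ℝ) : Set X :=
  {x | ∃ g : Fin n → X, (∀ i, g i ∈ Slice (f i) (ε i)) ∧ x = ∑ i, lam i • g i}

/-- The strong diameter 2 property. -/
def StrongD2P (X : Type*) [NormedAddCommGroup X] [NormedSpace ℝ X] : Prop :=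
  ∀ (n : ℕ) (lam : Fin n → ℝ) (f : Fin n → X →L[ℝ] ℝ) (ε : Fin n → ℝ),
    (∀ i, 0 ≤ lam i) → ∑ i, lam i = 1 → (∀ i, ‖f i‖ = 1) → (∀ i, 0 < ε i) →
    Metric.diam (CombSlices lam f ε) = 2

/-- The diameter 2 property. -/
def D2P (X : Type*) [NormedAddCommGroup X] [NormedSpace ℝ X] : Prop :=
  ∀ W : Set X, IsWeaklyOpen W → (closedBall (0:X) 1 ∩ W).Nonempty →
    Metric.diam (closedBall (0:X) 1 ∩ W) = 2

/-- The local diameter 2 property. -/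
def LocalD2P (X : Type*) [NormedAddCommGroup X] [NormedSpace ℝ X] : Prop :=
  ∀ (f : X →L[ℝ] ℝ) (ε : ℝ), ‖f‖ = 1 → 0 < ε → Metric.diam (Slice f ε) = 2


/-- The Daugavet property: `‖I + T‖ = 1 + ‖T‖` for every rank-one operator `T = f ⊗ y`. -/
def HasDaugavetProperty (X : Type*) [NormedAddCommGroup X] [NormedSpace ℝ X] : Prop :=
  ∀ (f : X →L[ℝ] ℝ) (y : X),
    ‖ContinuousLinearMap.id ℝ X + f.smulRight y‖ = 1 + ‖f.smulRight y‖

section aux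
variable {X : Type*} [NormedAddCommGroup X] [NormedSpace ℝ X]

lemma comb_norm_le' {n : ℕ} {lam : Fin n → ℝ} {y : Fin n → X}
    (h0 : ∀ i, 0 ≤ lam i) (h1 : ∑ i, lam i = 1) (hy : ∀ i, ‖y i‖ ≤ 1) :
    ‖∑ i, lam i • y i‖ ≤ 1 := by
  calc ‖∑ i, lam i • y i‖ ≤ ∑ i, ‖lam i • y i‖ := norm_sum_le _ _
    _ ≤ ∑ i, lam i := by
        refine Finset.sum_le_sum fun i _ => ?_
        rw [norm_smul, Real.norm_eq_abs, abs_of_nonneg (h0 i)]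
        calc lam i * ‖y i‖ ≤ lam i * 1 := mul_le_mul_of_nonneg_left (hy i) (h0 i)
          _ = lam i := mul_one _
    _ = 1 := h1

lemma key_lemma' (h : HasDaugavetProperty X) (f : X →L[ℝ] ℝ) (hf : ‖f‖ = 1)
    (x : X) (hx : ‖x‖ = 1) (η : ℝ) (hη : 0 < η) (hη1 : η < 1) :
    ∃ y : X, ‖y‖ ≤ 1 ∧ 1 - η < f y ∧
      ∃ G : X →L[ℝ] ℝ, ‖G‖ ≤ 1 ∧ 1 - η < G x ∧ 1 - η < G y := by
  have hT : ‖ContinuousLinearMap.id ℝ X + f.smulRight x‖ = 2 := by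
    rw [h f x, ContinuousLinearMap.norm_smulRight_apply, hf, hx]; norm_num
  have h2 : (2 - η : ℝ) < ‖ContinuousLinearMap.id ℝ X + f.smulRight x‖ := by
    rw [hT]; linarith
  obtain ⟨z₀, hz₀1, hz₀2⟩ := ContinuousLinearMap.exists_lt_apply_of_lt_opNorm _ h2
  rw [show (ContinuousLinearMap.id ℝ X + f.smulRight x) z₀ = z₀ + f z₀ • x by
    simp [ContinuousLinearMap.smulRight_apply]] at hz₀2
  -- get z with f z > 1 - η
  obtain ⟨z, hzn, hfz, hzx⟩ : ∃ z : X, ‖z‖ ≤ 1 ∧ 1 - η < f z ∧ 2 - η < ‖z + f z • x‖ := by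
    have habs : 1 - η < |f z₀| := by
      have hle : ‖z₀ + f z₀ • x‖ ≤ ‖z₀‖ + |f z₀| * ‖x‖ := by
        calc ‖z₀ + f z₀ • x‖ ≤ ‖z₀‖ + ‖f z₀ • x‖ := norm_add_le _ _
          _ = ‖z₀‖ + |f z₀| * ‖x‖ := by rw [norm_smul, Real.norm_eq_abs]
      rw [hx, mul_one] at hle
      linarith [hz₀1.le]
    rcases le_or_gt 0 (f z₀) with hpos | hneg
    · exact ⟨z₀, hz₀1.le, by rwa [abs_of_nonneg hpos] at habs, hz₀2⟩
    · refine ⟨-z₀, by simpa using hz₀1.le, ?_, ?_⟩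
      · rw [map_neg]; rwa [abs_of_neg hneg] at habs
      · rw [map_neg, show -z₀ + (-(f z₀)) • x = -(z₀ + f z₀ • x) by
          rw [neg_smul, neg_add]]
        rwa [norm_neg]
  have hfz1 : f z ≤ 1 := by
    have hb := f.le_opNorm z
    rw [hf, one_mul, Real.norm_eq_abs] at hb
    calc f z ≤ |f z| := le_abs_self _
      _ ≤ ‖z‖ := hb
      _ ≤ 1 := hzn
  have hfzpos : 0 < f z := by linarith
  set w := z + f z • x with hw
  have hwne : w ≠ 0 := by
    intro h0
    rw [h0, norm_zero] at hzx; linarith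
  obtain ⟨G, hG1, hGw⟩ := exists_dual_vector ℝ w (norm_ne_zero_iff.mpr hwne)
  have hGw' : G w = ‖w‖ := by exact_mod_cast hGw
  have hGwgt : 2 - η < G w := by rw [hGw']; exact hzx
  have hsplit : G w = G z + f z * G x := by
    rw [hw, map_add, map_smul, smul_eq_mul]
  have hGz1 : G z ≤ 1 := by
    have hb := G.le_opNorm z
    rw [hG1, one_mul, Real.norm_eq_abs] at hb
    calc G z ≤ |G z| := le_abs_self _
      _ ≤ ‖z‖ := hb
      _ ≤ 1 := hzn
  have hGx1 : G x ≤ 1 := by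
    have hb := G.le_opNorm x
    rw [hG1, one_mul, Real.norm_eq_abs, hx] at hb
    calc G x ≤ |G x| := le_abs_self _
      _ ≤ 1 := hb
  have hGzgt : 1 - η < G z := by nlinarith
  have hGxgt : 1 - η < G x := by nlinarith
  exact ⟨z, hzn, hfz, G, le_of_eq hG1, hGxgt, hGzgt⟩

lemma pmain' (h : HasDaugavetProperty X) :
    ∀ (n : ℕ) (lam : Fin n → ℝ) (f : Fin n → X →L[ℝ] ℝ) (ε : Fin n → ℝ),
      (∀ i, 0 < lam i) → ∑ i, lam i = 1 → (∀ i, ‖f i‖ = 1) → (∀ i, 0 < ε i) →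
      ∀ x : X, ‖x‖ = 1 → ∀ δ : ℝ, 0 < δ → δ ≤ 1 →
      ∃ y : Fin n → X, (∀ i, y i ∈ Slice (f i) (ε i)) ∧
        2 - δ < ‖x + ∑ i, lam i • y i‖ := by
  intro n
  induction n with
  | zero => intro lam f ε hlam hsum; simp at hsum
  | succ n ih =>
    intro lam f ε hlam hsum hf hε x hx δ hδ hδ1
    by_cases hn : n = 0
    · subst hn
      have hlam0 : lam 0 = 1 := by rwa [Fin.sum_univ_one] at hsum
      have hηpos : (0:ℝ) < min (ε 0) (δ/2) := lt_min (hε 0) (by linarith)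
      have hη1 : min (ε 0) (δ/2) < 1 := lt_of_le_of_lt (min_le_right _ _) (by linarith)
      obtain ⟨y, hy1, hy2, G, hG, hGx, hGy⟩ := key_lemma' h (f 0) (hf 0) x hx _ hηpos hη1
      refine ⟨fun _ => y, fun i => ⟨hy1, ?_⟩, ?_⟩
      · show 1 - ε i < f i y
        have hi : i = 0 := Fin.fin_one_eq_zero i
        subst hi
        have hm : min (ε 0) (δ/2) ≤ ε 0 := min_le_left _ _
        linarith
      · rw [Fin.sum_univ_one, hlam0, one_smul]
        have hGle : G (x + y) ≤ ‖x + y‖ := by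
          have hb := G.le_opNorm (x + y)
          rw [Real.norm_eq_abs] at hb
          calc G (x + y) ≤ |G (x + y)| := le_abs_self _
            _ ≤ ‖G‖ * ‖x + y‖ := hb
            _ ≤ 1 * ‖x + y‖ := mul_le_mul_of_nonneg_right hG (norm_nonneg _)
            _ = ‖x + y‖ := one_mul _
        have : 2 - δ < G (x + y) := by
          rw [map_add]
          have h1 : min (ε 0) (δ/2) ≤ δ/2 := min_le_right _ _
          linarith
        linarith
    · -- n ≥ 1
      have hnpos : 0 < n := Nat.pos_of_ne_zero hn
      set μ := lam (Fin.last n) with hμdef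
      have hμpos : 0 < μ := hlam _
      set s := ∑ i : Fin n, lam i.castSucc with hsdef
      have hsum' : s + μ = 1 := by rw [hsdef, hμdef, ← Fin.sum_univ_castSucc]; exact hsum
      have hspos : 0 < s :=
        Finset.sum_pos (fun i _ => hlam _) ⟨⟨0, hnpos⟩, Finset.mem_univ _⟩
      have hμ1 : μ < 1 := by linarith
      set lam' : Fin n → ℝ := fun i => lam i.castSucc / s with hlam'def
      have hlam'pos : ∀ i, 0 < lam' i := fun i => div_pos (hlam _) hspos
      have hlam'sum : ∑ i, lam' i = 1 := by
        rw [hlam'def, ← Finset.sum_div, ← hsdef, div_self hspos.ne']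
      obtain ⟨y', hy'slice, hwbig⟩ := ih lam' (fun i => f i.castSucc) (fun i => ε i.castSucc)
        hlam'pos hlam'sum (fun i => hf _) (fun i => hε _) x hx (δ/2) (by linarith) (by linarith)
      set w := ∑ i, lam' i • y' i with hwdef
      have hwle : ‖w‖ ≤ 1 :=
        comb_norm_le' (fun i => (hlam'pos i).le) hlam'sum (fun i => (hy'slice i).1)
      set c := ‖x + w‖ with hcdef
      have hc : 2 - δ/2 < c := hwbig
      have hcpos : 0 < c := by linarith
      have hcle : c ≤ 2 := by
        calc c ≤ ‖x‖ + ‖w‖ := norm_add_le _ _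
          _ ≤ 2 := by rw [hx]; linarith
      set z := c⁻¹ • (x + w) with hzdef
      have hz : ‖z‖ = 1 := by
        rw [hzdef, norm_smul, Real.norm_eq_abs, abs_of_pos (inv_pos.mpr hcpos), ← hcdef,
          inv_mul_cancel₀ hcpos.ne']
      set η := min (ε (Fin.last n)) (δ/12) with hηdef
      have hηpos : 0 < η := lt_min (hε _) (by linarith)
      have hη1 : η < 1 := lt_of_le_of_lt (min_le_right _ _) (by linarith)
      obtain ⟨yl, hyl1, hyl2, G, hG, hGz, hGyl⟩ :=
        key_lemma' h (f (Fin.last n)) (hf _) z hz η hηpos hη1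
      set y : Fin (n+1) → X := Fin.snoc y' yl with hydef
      have hylast : y (Fin.last n) = yl := Fin.snoc_last _ _
      have hycast : ∀ i : Fin n, y i.castSucc = y' i := fun i => Fin.snoc_castSucc _ _ _
      refine ⟨y, ?_, ?_⟩
      · intro i
        refine Fin.lastCases ?_ (fun j => ?_) i
        · rw [hylast]
          refine ⟨hyl1, ?_⟩
          have : η ≤ ε (Fin.last n) := min_le_left _ _
          linarith
        · rw [hycast]; exact hy'slice j
      · -- compute the sum
        have hsumval : ∑ i, lam i • y i = s • w + μ • yl := by
          rw [Fin.sum_univ_castSucc]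
          congr 1
          · rw [hwdef, Finset.smul_sum]
            refine Finset.sum_congr rfl fun i _ => ?_
            rw [hycast, smul_smul, hlam'def]
            congr 1
            field_simp
          · rw [hylast]
        rw [hsumval]
        have hs1 : s = 1 - μ := by linarith
        have hveq : x + ((1 - μ) • w + μ • yl) = (x + w) + μ • (yl - w) := by
          rw [sub_smul, one_smul, smul_sub]; abel
        rw [hs1, hveq]
        -- lower bound via G
        set V := (x + w) + μ • (yl - w) with hVdef
        have hGV : G V = G (x + w) + μ * (G yl - G w) := by
          rw [hVdef, map_add, map_smul, map_sub, smul_eq_mul]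
        have hGle : G V ≤ ‖V‖ := by
          have hb := G.le_opNorm V
          rw [Real.norm_eq_abs] at hb
          calc G V ≤ |G V| := le_abs_self _
            _ ≤ ‖G‖ * ‖V‖ := hb
            _ ≤ 1 * ‖V‖ := mul_le_mul_of_nonneg_right hG (norm_nonneg _)
            _ = ‖V‖ := one_mul _
        have hxw : (x + w) = c • z := (smul_inv_smul₀ hcpos.ne' _).symm
        have hGxw : G (x + w) = c * G z := by rw [hxw, map_smul, smul_eq_mul]
        have hGw : |G w| ≤ 1 := by
          have hb := G.le_opNorm w
          rw [Real.norm_eq_abs] at hb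
          calc |G w| ≤ ‖G‖ * ‖w‖ := hb
            _ ≤ 1 * 1 := mul_le_mul hG hwle (norm_nonneg _) zero_le_one
            _ = 1 := one_mul _
        have hGwle : G w ≤ 1 := le_trans (le_abs_self _) hGw
        have hGzle : G z ≤ 1 := by
          have hb := G.le_opNorm z
          rw [Real.norm_eq_abs, hz] at hb
          calc G z ≤ |G z| := le_abs_self _
            _ ≤ ‖G‖ * 1 := hb
            _ ≤ 1 := by linarith [hG]
        have hημ : η ≤ δ/12 := min_le_right _ _
        have hμle : μ ≤ 1 := by linarith
        have h1 : (2 - δ/2) * (1 - η) < G (x + w) := by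
          rw [hGxw]
          have a1 : (2 - δ/2) * (1 - η) < c * (1 - η) := by
            apply mul_lt_mul_of_pos_right hc
            linarith
          have a2 : c * (1 - η) < c * G z := mul_lt_mul_of_pos_left hGz hcpos
          linarith
        have h2 : μ * (1 - η) < μ * G yl := mul_lt_mul_of_pos_left hGyl hμpos
        have h3 : μ * G w ≤ μ := by
          calc μ * G w ≤ μ * 1 := mul_le_mul_of_nonneg_left hGwle hμpos.le
            _ = μ := mul_one _
        clear_value V z w c μ s η
        have hfinal : 2 - δ < G V := by
          rw [hGV]; nlinarith
        linarith
  end aux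

/-- A Banach space with the Daugavet property has the strong diameter 2 property: in every
finite convex combination of slices of the unit ball there are points at distance greater
than `2 − ε`, for every `ε > 0`. -/
theorem stmt_12 (X : Type*) [NormedAddCommGroup X] [NormedSpace ℝ X] [CompleteSpace X]
    (h : HasDaugavetProperty X) :
    ∀ (n : ℕ) (lam : Fin n → ℝ) (f : Fin n → X →L[ℝ] ℝ) (ε : Fin n → ℝ),
      (∀ i, 0 < lam i) → ∑ i, lam i = 1 → (∀ i, ‖f i‖ = 1) → (∀ i, 0 < ε i) →
      ∀ ε' : ℝ, 0 < ε' →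
        ∃ u ∈ CombSlices lam f ε, ∃ v ∈ CombSlices lam f ε, 2 - ε' < ‖u - v‖ := by
  intro n lam f ε hlam hsum hf hε ε' hε'
  rcases Nat.eq_zero_or_pos n with h0 | hnpos
  · subst h0; simp at hsum
  set δ := min (ε'/3) (1/2 : ℝ) with hδdef
  have hδpos : 0 < δ := lt_min (by linarith) (by norm_num)
  have hδhalf : δ ≤ 1/2 := min_le_right _ _
  have hδ1 : δ ≤ 1 := by linarith
  have hδε : 2*δ < ε' := by
    have h3 : δ ≤ ε'/3 := min_le_left _ _
    linarith
  have i₀ : Fin n := ⟨0, hnpos⟩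
  obtain ⟨x, hx1, hx2⟩ := (f i₀).exists_lt_apply_of_lt_opNorm (r := 1/2)
    (by rw [hf i₀]; norm_num)
  have hxne : x ≠ 0 := by
    rintro rfl
    rw [map_zero, norm_zero] at hx2
    linarith
  set x₀ := ‖x‖⁻¹ • x with hx₀def
  have hx₀ : ‖x₀‖ = 1 := by
    rw [hx₀def, norm_smul, Real.norm_eq_abs,
      abs_of_pos (inv_pos.mpr (norm_pos_iff.mpr hxne)),
      inv_mul_cancel₀ (norm_ne_zero_iff.mpr hxne)]
  obtain ⟨y₁, hy₁s, hv⟩ := pmain' h n lam f ε hlam hsum hf hε x₀ hx₀ δ hδpos hδ1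
  set v := ∑ i, lam i • y₁ i with hvdef
  have hvmem : v ∈ CombSlices lam f ε := ⟨y₁, hy₁s, hvdef⟩
  have hvle : ‖v‖ ≤ 1 := comb_norm_le' (fun i => (hlam i).le) hsum (fun i => (hy₁s i).1)
  have hvlb : 1 - δ < ‖v‖ := by
    have hb : ‖x₀ + v‖ ≤ 1 + ‖v‖ := by
      calc ‖x₀ + v‖ ≤ ‖x₀‖ + ‖v‖ := norm_add_le _ _
        _ = 1 + ‖v‖ := by rw [hx₀]
    linarith
  have hvpos : 0 < ‖v‖ := by linarith
  set x₁ := -(‖v‖⁻¹ • v) with hx₁def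
  have hx₁ : ‖x₁‖ = 1 := by
    rw [hx₁def, norm_neg, norm_smul, Real.norm_eq_abs, abs_of_pos (inv_pos.mpr hvpos),
      inv_mul_cancel₀ hvpos.ne']
  obtain ⟨y₂, hy₂s, hu⟩ := pmain' h n lam f ε hlam hsum hf hε x₁ hx₁ δ hδpos hδ1
  set u := ∑ i, lam i • y₂ i with hudef
  have humem : u ∈ CombSlices lam f ε := ⟨y₂, hy₂s, hudef⟩
  refine ⟨u, humem, v, hvmem, ?_⟩
  have heq : x₁ + u = u - ‖v‖⁻¹ • v := by rw [hx₁def]; abel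
  rw [heq] at hu
  have hinv : 1 ≤ ‖v‖⁻¹ := by
    have hm : ‖v‖ * 1 ≤ ‖v‖ * ‖v‖⁻¹ := by
      rw [mul_inv_cancel₀ hvpos.ne', mul_one]; exact hvle
    exact (mul_le_mul_iff_right₀ hvpos).mp hm
  have hsub : ‖v - ‖v‖⁻¹ • v‖ = 1 - ‖v‖ := by
    have h1 : v - ‖v‖⁻¹ • v = (1 - ‖v‖⁻¹) • v := by rw [sub_smul, one_smul]
    rw [h1, norm_smul, Real.norm_eq_abs, abs_of_nonpos (by linarith)]
    field_simp
    ring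
  have htri : ‖u - ‖v‖⁻¹ • v‖ ≤ ‖u - v‖ + ‖v - ‖v‖⁻¹ • v‖ := by
    have he : u - ‖v‖⁻¹ • v = (u - v) + (v - ‖v‖⁻¹ • v) := by abel
    rw [he]; exact norm_add_le _ _
  rw [hsub] at htri
  linarith
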